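/- arXiv:1207.1779 — 7 statements merged into one kernel-verified Lean document; each statement's English description precedes it below -/
import Mathlib

section
/- Let G be a vertex-transitive finite graph containing a clique of size d. Then G contains at least |V(G)|/d^2 pairwise vertex-disjoint cliques of size d. -/
open Finset

private lemma clique_image {V : Type*} [DecidableEq V] {G : SimpleGraph V} {d : ℕ}
    (φ : G ≃g G) {s : Finset V} (hs : G.IsNClique d s) :
    G.IsNClique d (s.image φ) := by
  constructor
  · intro a ha b hb hab
    simp only [coe_image, Set.mem_image, mem_coe] at ha hb
    obtain ⟨x, hx, rfl⟩ := ha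
    obtain ⟨y, hy, rfl⟩ := hb
    have hxy : x ≠ y := fun h => hab (by rw [h])
    exact φ.map_rel_iff.2 (hs.1 hx hy hxy)
  · rw [Finset.card_image_of_injective _ φ.injective, hs.2]

theorem stmt_1 {V : Type*} [Fintype V] [DecidableEq V] (G : SimpleGraph V) (d : ℕ)
    (htrans : ∀ u v : V, ∃ φ : G ≃g G, φ u = v)
    (hclique : ∃ s : Finset V, G.IsNClique d s) :
    ∃ 𝒞 : Finset (Finset V), (∀ s ∈ 𝒞, G.IsNClique d s) ∧
      (𝒞 : Set (Finset V)).PairwiseDisjoint id ∧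
      Fintype.card V / d ^ 2 ≤ 𝒞.card := by
  classical
  rcases Nat.eq_zero_or_pos d with rfl | hd
  · exact ⟨∅, by simp, by simp, by simp⟩
  rcases isEmpty_or_nonempty V with hV | hV'
  · refine ⟨∅, by simp, by simp, ?_⟩
    simp [Fintype.card_eq_zero]
  obtain ⟨v₀⟩ := hV'
  set K : Finset (Finset V) := univ.filter (fun s => G.IsNClique d s) with hK
  have hKmem : ∀ s, s ∈ K ↔ G.IsNClique d s := by simp [hK]
  set m : V → ℕ := fun v => (K.filter (fun s => v ∈ s)).card with hm
  -- m is constant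
  have hmconst : ∀ u v, m u = m v := by
    intro u v
    obtain ⟨φ, hφ⟩ := htrans u v
    apply Finset.card_bij' (fun s _ => s.image φ) (fun s _ => s.image φ.symm)
    · intro s _
      rw [Finset.image_image]
      ext x; simp
    · intro s _
      rw [Finset.image_image]
      ext x; simp
    · intro s hs
      simp only [mem_filter] at hs ⊢
      refine ⟨(hKmem _).1 hs.1 |> (fun h => (hKmem _).2 (clique_image φ h)), ?_⟩
      rw [Finset.mem_image]
      exact ⟨u, hs.2, hφ⟩
    · intro s hs
      simp only [mem_filter] at hs ⊢
      refine ⟨(hKmem _).1 hs.1 |> (fun h => (hKmem _).2 (clique_image φ.symm h)), ?_⟩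
      rw [Finset.mem_image]
      exact ⟨v, hs.2, by rw [← hφ]; exact φ.toEquiv.symm_apply_apply u⟩
  -- every vertex lies in a clique
  have hm1 : ∀ v, 1 ≤ m v := by
    intro v
    obtain ⟨s, hs⟩ := hclique
    have hsne : s.Nonempty := by
      rw [← Finset.card_pos, hs.2]; exact hd
    obtain ⟨u, hu⟩ := hsne
    obtain ⟨φ, hφ⟩ := htrans u v
    rw [Nat.succ_le_iff, Finset.card_pos]
    refine ⟨s.image φ, ?_⟩
    simp only [mem_filter, hKmem]
    exact ⟨clique_image φ hs, Finset.mem_image.2 ⟨u, hu, hφ⟩⟩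
  -- double counting
  have hsum : ∑ v, m v = d * K.card := by
    simp only [hm, Finset.card_filter]
    rw [Finset.sum_comm]
    rw [Finset.sum_congr rfl (fun s hs => ?_)]
    · rw [Finset.sum_const, smul_eq_mul, mul_comm]
    · have : ∑ v, (if v ∈ s then 1 else 0) = s.card := by
        rw [Finset.sum_ite_mem, Finset.univ_inter, Finset.card_eq_sum_ones]
      rw [this, ((hKmem s).1 hs).2]
  -- maximal family
  set F : Finset (Finset (Finset V)) :=
    K.powerset.filter (fun 𝒞 => (𝒞 : Set (Finset V)).PairwiseDisjoint id) with hF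
  have hFne : F.Nonempty := ⟨∅, by
    simp only [hF, mem_filter, Finset.mem_powerset]
    exact ⟨Finset.empty_subset _, by simp⟩⟩
  obtain ⟨𝒞, h𝒞F, hmax⟩ := Finset.exists_max_image F Finset.card hFne
  simp only [hF, mem_filter, Finset.mem_powerset] at h𝒞F
  obtain ⟨h𝒞K, h𝒞disj⟩ := h𝒞F
  set U : Finset V := 𝒞.biUnion id with hU
  -- every clique meets U
  have hmeet : ∀ s ∈ K, ∃ u ∈ U, u ∈ s := by
    intro s hs
    by_contra hcon
    push_neg at hcon
    have hdisj : ∀ t ∈ 𝒞, Disjoint s t := by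
      intro t ht
      rw [Finset.disjoint_left]
      intro a has hat
      exact hcon a (Finset.mem_biUnion.2 ⟨t, ht, hat⟩) has
    have hsne : s.Nonempty := by
      rw [← Finset.card_pos, ((hKmem s).1 hs).2]; exact hd
    have hsnot : s ∉ 𝒞 := fun h => by
      have := hdisj s h
      simp only [id, disjoint_self, Finset.bot_eq_empty] at this
      exact hsne.ne_empty this
    have hins : insert s 𝒞 ∈ F := by
      simp only [hF, mem_filter, Finset.mem_powerset]
      constructor
      · exact Finset.insert_subset hs h𝒞K
      · rw [Finset.coe_insert]
        exact h𝒞disj.insert (fun t ht _ => hdisj t ht)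
    have := hmax _ hins
    rw [Finset.card_insert_of_notMem hsnot] at this
    omega
  -- K.card ≤ ∑ u in U, m u
  have hKle : K.card ≤ ∑ u ∈ U, m u := by
    calc K.card ≤ (U.biUnion (fun u => K.filter (fun s => u ∈ s))).card := by
          apply Finset.card_le_card
          intro s hs
          obtain ⟨u, huU, hus⟩ := hmeet s hs
          exact Finset.mem_biUnion.2 ⟨u, huU, Finset.mem_filter.2 ⟨hs, hus⟩⟩
      _ ≤ ∑ u ∈ U, m u := Finset.card_biUnion_le
  have hUcard : U.card ≤ 𝒞.card * d := by
    calc U.card ≤ ∑ t ∈ 𝒞, t.card := Finset.card_biUnion_le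
      _ = ∑ t ∈ 𝒞, d := Finset.sum_congr rfl (fun t ht => ((hKmem t).1 (h𝒞K ht)).2)
      _ = 𝒞.card * d := by rw [Finset.sum_const, smul_eq_mul]
  -- put together
  have hmain : Fintype.card V ≤ d ^ 2 * 𝒞.card := by
    have h1 : Fintype.card V * m v₀ = ∑ v, m v := by
      rw [Finset.sum_congr rfl (fun v _ => hmconst v v₀), Finset.sum_const,
        smul_eq_mul, Finset.card_univ]
    have h2 : ∑ u ∈ U, m u = U.card * m v₀ := by
      rw [Finset.sum_congr rfl (fun u _ => hmconst u v₀), Finset.sum_const, smul_eq_mul]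
    have h3 : Fintype.card V * m v₀ ≤ d ^ 2 * 𝒞.card * m v₀ := by
      calc Fintype.card V * m v₀ = d * K.card := by rw [h1, hsum]
        _ ≤ d * (U.card * m v₀) := by
            apply Nat.mul_le_mul_left
            rw [← h2]; exact hKle
        _ ≤ d * ((𝒞.card * d) * m v₀) := by
            apply Nat.mul_le_mul_left
            exact Nat.mul_le_mul_right _ hUcard
        _ = d ^ 2 * 𝒞.card * m v₀ := by ring
    exact Nat.le_of_mul_le_mul_right h3 (hm1 v₀)
  refine ⟨𝒞, fun s hs => (hKmem s).1 (h𝒞K hs), h𝒞disj, ?_⟩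
  calc Fintype.card V / d ^ 2 ≤ d ^ 2 * 𝒞.card / d ^ 2 := Nat.div_le_div_right hmain
    _ = 𝒞.card := Nat.mul_div_cancel_left _ (by positivity)
end

section
/- If there exists a Hadamard matrix of size n+1, then the graph G_n contains a clique of size n. -/
/-- A Hadamard matrix: entries in `{-1,1}` and pairwise orthogonal rows. -/
def IsHadamard {m : ℕ} (M : Matrix (Fin m) (Fin m) ℝ) : Prop :=
  (∀ i j, M i j = 1 ∨ M i j = -1) ∧ ∀ i j, i ≠ j → ∑ k, M i k * M j k = 0

/-- The graph `G_n`. -/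
def Gn (n : ℕ) :
    SimpleGraph {x : Fin n → Bool // hammingDist x (fun _ => false) = (n + 1) / 2} :=
  SimpleGraph.fromRel (fun x y => hammingDist x.1 y.1 = (n + 1) / 2)

/-!
Normalize a Hadamard matrix `H` of order `n + 1` so that its first row and first column
consist of ones, and delete them. Encoding `-1` as `true`, the rows of the remaining `n × n`
block become binary words. For two distinct rows of `H`, orthogonality of `±1` vectors of
length `n + 1` means that they differ in exactly `(n + 1) / 2` places, none of them in the
deleted column. Comparing with the all-ones first row, each word has weight `(n + 1) / 2`;
comparing two of them, they are at distance `(n + 1) / 2`. So the `n` words form a clique in `G_n`.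
-/

open Finset

theorem SimpleGraph.exists_isNClique_of_pairwise_adj {V ι : Type*} [Fintype ι]
    {G : SimpleGraph V} (f : ι → V) (hf : Pairwise fun i j => G.Adj (f i) (f j)) :
    ∃ s : Finset V, G.IsNClique (Fintype.card ι) s :=
  let φ : (⊤ : SimpleGraph ι) →g G := ⟨f, fun h => hf h⟩
  ⟨_, isNClique_map_copy_top ⟨φ, φ.injective_of_top_hom⟩⟩

section SignVectors

variable {ι : Type*}

theorem mul_eq_one_or_neg_one {x y : ℝ} (hx : x = 1 ∨ x = -1) (hy : y = 1 ∨ y = -1) :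
    x * y = 1 ∨ x * y = -1 := by
  rcases hx with rfl | rfl <;> rcases hy with rfl | rfl <;> norm_num

theorem sum_mul_eq_card_sub_two_mul_hammingDist [Fintype ι] {u v : ι → ℝ}
    (hu : ∀ k, u k = 1 ∨ u k = -1) (hv : ∀ k, v k = 1 ∨ v k = -1) :
    ∑ k, u k * v k = Fintype.card ι - 2 * hammingDist u v := by
  have hterm : ∀ k, u k * v k = 1 - 2 * if u k ≠ v k then 1 else 0 := by
    intro k
    rcases hu k with h | h <;> rcases hv k with h' | h' <;> norm_num [h, h']
  simp only [hterm, sum_sub_distrib, ← mul_sum, sum_boole, hammingDist]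
  simp

theorem two_mul_hammingDist_of_sum_mul_eq_zero [Fintype ι] {u v : ι → ℝ}
    (hu : ∀ k, u k = 1 ∨ u k = -1) (hv : ∀ k, v k = 1 ∨ v k = -1)
    (huv : ∑ k, u k * v k = 0) :
    2 * hammingDist u v = Fintype.card ι := by
  rw [sum_mul_eq_card_sub_two_mul_hammingDist hu hv, sub_eq_zero] at huv
  exact_mod_cast huv.symm

noncomputable def signBits (v : ι → ℝ) : ι → Bool := fun k => decide (v k = -1)

theorem signBits_one : signBits (fun _ : ι => (1 : ℝ)) = fun _ => false := by
  funext k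
  norm_num [signBits]

theorem hammingDist_signBits [Fintype ι] {u v : ι → ℝ}
    (hu : ∀ k, u k = 1 ∨ u k = -1) (hv : ∀ k, v k = 1 ∨ v k = -1) :
    hammingDist (signBits u) (signBits v) = hammingDist u v := by
  unfold hammingDist
  congr 1
  refine filter_congr fun k _ => ?_
  rcases hu k with h | h <;> rcases hv k with h' | h' <;> norm_num [signBits, h, h']

end SignVectors

theorem hammingDist_tail {n : ℕ} {β : Type*} [DecidableEq β] {u v : Fin (n + 1) → β}
    (h : u 0 = v 0) : hammingDist (Fin.tail u) (Fin.tail v) = hammingDist u v := by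
  rw [hammingDist, hammingDist, card_filter, card_filter, Fin.sum_univ_succ,
    if_neg (not_not.2 h), zero_add]
  rfl

namespace IsHadamard

variable {m : ℕ} {M : Matrix (Fin m) (Fin m) ℝ}

theorem signs_mul (hM : IsHadamard M) {r c : Fin m → ℝ}
    (hr : ∀ i, r i = 1 ∨ r i = -1) (hc : ∀ j, c j = 1 ∨ c j = -1) :
    IsHadamard (Matrix.of fun i j => r i * c j * M i j) := by
  refine ⟨fun i j => mul_eq_one_or_neg_one (mul_eq_one_or_neg_one (hr i) (hc j)) (hM.1 i j),
    fun i j hij => ?_⟩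
  have hc2 : ∀ k, c k * c k = 1 := fun k => mul_self_eq_one_iff.mpr (hc k)
  calc ∑ k, r i * c k * M i k * (r j * c k * M j k)
        = ∑ k, r i * r j * ((c k * c k) * (M i k * M j k)) := by
          refine sum_congr rfl fun k _ => ?_; ring
    _ = 0 := by simp only [hc2, one_mul, ← mul_sum, hM.2 i j hij, mul_zero]

theorem exists_normalized [NeZero m] (hM : IsHadamard M) :
    ∃ N : Matrix (Fin m) (Fin m) ℝ, IsHadamard N ∧ (∀ j, N 0 j = 1) ∧ ∀ i, N i 0 = 1 := by
  have hsq : ∀ i j, M i j * M i j = 1 := fun i j => mul_self_eq_one_iff.mpr (hM.1 i j)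
  refine ⟨_, hM.signs_mul (c := fun j => M 0 j * M 0 0) (fun i => hM.1 i 0)
    (fun j => mul_eq_one_or_neg_one (hM.1 0 j) (hM.1 0 0)), fun j => ?_, fun i => ?_⟩
  · simp only [Matrix.of_apply]
    linear_combination (M 0 j * M 0 j) * hsq 0 0 + hsq 0 j
  · simp only [Matrix.of_apply]
    linear_combination (M 0 0 * M 0 0) * hsq i 0 + hsq 0 0

theorem two_mul_hammingDist_signBits_tail {n : ℕ} {N : Matrix (Fin (n + 1)) (Fin (n + 1)) ℝ}
    (hN : IsHadamard N) (hcol : ∀ i, N i 0 = 1) {i j : Fin (n + 1)} (hij : i ≠ j) :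
    2 * hammingDist (signBits (Fin.tail (N i))) (signBits (Fin.tail (N j))) = n + 1 := by
  rw [hammingDist_signBits (u := Fin.tail (N i)) (v := Fin.tail (N j)) (fun k => hN.1 i _)
      (fun k => hN.1 j _),
    hammingDist_tail (by rw [hcol, hcol]),
    two_mul_hammingDist_of_sum_mul_eq_zero (hN.1 i) (hN.1 j) (hN.2 i j hij), Fintype.card_fin]

end IsHadamard

theorem Gn_adj_of_two_mul_hammingDist {n : ℕ} {x y : {x : Fin n → Bool //
      hammingDist x (fun _ => false) = (n + 1) / 2}}
    (h : 2 * hammingDist x.1 y.1 = n + 1) : (Gn n).Adj x y := by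
  refine (SimpleGraph.fromRel_adj _ _ _).2 ⟨fun hxy => ?_, Or.inl (by omega)⟩
  rw [hxy, hammingDist_self] at h
  omega

theorem stmt_4_general (n : ℕ)
    (hH : ∃ M : Matrix (Fin (n + 1)) (Fin (n + 1)) ℝ, IsHadamard M) :
    ∃ s : Finset {x : Fin n → Bool // hammingDist x (fun _ => false) = (n + 1) / 2},
      (Gn n).IsNClique n s := by
  obtain ⟨M, hM⟩ := hH
  obtain ⟨N, hN, hrow, hcol⟩ := hM.exists_normalized
  have hdist : ∀ i j : Fin n, i ≠ j → 2 * hammingDist (signBits (Fin.tail (N i.succ)))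
      (signBits (Fin.tail (N j.succ))) = n + 1 := fun i j hij =>
    hN.two_mul_hammingDist_signBits_tail hcol (Fin.succ_injective n |>.ne hij)
  have hzero : signBits (Fin.tail (N 0)) = fun _ => false := by
    rw [show Fin.tail (N 0) = fun _ => 1 from funext fun k => hrow k.succ, signBits_one]
  have hweight : ∀ i : Fin n, hammingDist (signBits (Fin.tail (N i.succ))) (fun _ => false)
      = (n + 1) / 2 := fun i => by
    have := hN.two_mul_hammingDist_signBits_tail hcol (Fin.succ_ne_zero i)
    rw [hzero] at this
    omega
  simpa using SimpleGraph.exists_isNClique_of_pairwise_adj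
    (fun i => ⟨_, hweight i⟩) fun i j hij => Gn_adj_of_two_mul_hammingDist (hdist i j hij)

theorem stmt_4 (n : ℕ) (hn : Odd n)
    (hH : ∃ M : Matrix (Fin (n + 1)) (Fin (n + 1)) ℝ, IsHadamard M) :
    ∃ s : Finset {x : Fin n → Bool // hammingDist x (fun _ => false) = (n + 1) / 2},
      (Gn n).IsNClique n s :=
  stmt_4_general n hH
end

section
/- If there exists a Hadamard matrix of size n+1, then H_n contains at least |V(H_n)|/(n+1)^2 pairwise vertex-disjoint cliques of size n+1. -/
/-- The graph `H_n`. -/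
def Hn (n : ℕ) :
    SimpleGraph {x : Fin n → Bool // Even (hammingDist x (fun _ => false))} :=
  SimpleGraph.fromRel (fun x y => hammingDist x.1 y.1 = (n + 1) / 2)

namespace S7aux

variable {n : ℕ}

def xorB (x y : Fin n → Bool) : Fin n → Bool := fun k => xor (x k) (y k)

lemma dist_xorB_left (t x y : Fin n → Bool) :
    hammingDist (xorB t x) (xorB t y) = hammingDist x y := by
  unfold hammingDist xorB
  congr 1
  apply Finset.filter_congr
  intro k _
  cases t k <;> simp

lemma dist_xorB_right (x y t : Fin n → Bool) :
    hammingDist (xorB x t) (xorB y t) = hammingDist x y := by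
  unfold hammingDist xorB
  congr 1
  apply Finset.filter_congr
  intro k _
  cases t k <;> simp

lemma weight_xorB (x y : Fin n → Bool) :
    hammingDist (xorB x y) (fun _ => false) = hammingDist x y := by
  unfold hammingDist xorB
  congr 1
  apply Finset.filter_congr
  intro k _
  cases x k <;> cases y k <;> simp

lemma xorB_cancel_right (s b : Fin n → Bool) : xorB (xorB s b) b = s := by
  funext k
  show xor (xor (s k) (b k)) (b k) = s k
  cases s k <;> cases b k <;> rfl

lemma xorB_left_cancel {t x y : Fin n → Bool} (h : xorB t x = xorB t y) : x = y := by
  funext k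
  have hk := congrFun h k
  show x k = y k
  revert hk
  show xor (t k) (x k) = xor (t k) (y k) → _
  cases t k <;> cases x k <;> cases y k <;> simp

lemma zmod2_dist (x y : Fin n → Bool) :
    (hammingDist x y : ZMod 2) =
      (hammingDist x (fun _ => false) : ZMod 2) + (hammingDist y (fun _ => false) : ZMod 2) := by
  unfold hammingDist
  rw [Finset.card_filter, Finset.card_filter, Finset.card_filter]
  push_cast
  rw [← Finset.sum_add_distrib]
  apply Finset.sum_congr rfl
  intro k _
  cases x k <;> cases y k <;> decide

lemma even_dist_iff (x y : Fin n → Bool) :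
    Even (hammingDist x y) ↔
      (Even (hammingDist x (fun _ => false)) ↔ Even (hammingDist y (fun _ => false))) := by
  have h := zmod2_dist x y
  have e : ∀ m : ℕ, Even m ↔ (m : ZMod 2) = 0 := by
    intro m
    rw [ZMod.natCast_eq_zero_iff]
    exact even_iff_two_dvd
  rw [e, e, e, h]
  generalize (hammingDist x (fun _ => false) : ZMod 2) = a
  generalize (hammingDist y (fun _ => false) : ZMod 2) = b
  revert a b; decide

lemma greedy {α : Type*} [DecidableEq α] [Fintype α] (R : α → α → Prop) [DecidableRel R] (d : ℕ)
    (hrefl : ∀ a, R a a) (hsymm : ∀ a b, R a b → R b a)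
    (hdeg : ∀ a : α, (Finset.univ.filter fun b => R a b).card ≤ d) (T : Finset α) :
    ∃ S : Finset α, S ⊆ T ∧
      (∀ s ∈ S, ∀ t ∈ S, s ≠ t → ¬ R s t) ∧ T.card ≤ S.card * d := by
  induction T using Finset.strongInduction with
  | _ T ih =>
    rcases T.eq_empty_or_nonempty with rfl | ⟨t, ht⟩
    · exact ⟨∅, by simp⟩
    · set T' := T.filter (fun s => ¬ R t s) with hT'
      have hss : T' ⊂ T := Finset.filter_ssubset.mpr ⟨t, ht, by simp [hrefl]⟩
      obtain ⟨S, hS1, hS2, hS3⟩ := ih T' hss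
      have htS : t ∉ S := fun h => (Finset.mem_filter.mp (hS1 h)).2 (hrefl t)
      refine ⟨insert t S, ?_, ?_, ?_⟩
      · exact Finset.insert_subset ht (hS1.trans (Finset.filter_subset _ _))
      · intro s hs u hu hne
        rcases Finset.mem_insert.mp hs with hst | hs'
        · rcases Finset.mem_insert.mp hu with hut | hu'
          · exact absurd (hst.trans hut.symm) hne
          · rw [hst]; exact (Finset.mem_filter.mp (hS1 hu')).2
        · rcases Finset.mem_insert.mp hu with hut | hu'
          · rw [hut]; exact fun h => (Finset.mem_filter.mp (hS1 hs')).2 (hsymm _ _ h)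
          · exact hS2 s hs' u hu' hne
      · have h1 : T.card = T'.card + (T.filter (fun s => R t s)).card := by
          rw [hT', add_comm]
          exact (Finset.card_filter_add_card_filter_not (fun s => R t s)).symm
        have h2 : (T.filter (fun s => R t s)).card ≤ d :=
          le_trans (Finset.card_le_card (fun x hx =>
            Finset.mem_filter.mpr ⟨Finset.mem_univ _, (Finset.mem_filter.mp hx).2⟩)) (hdeg t)
        rw [Finset.card_insert_of_notMem htS]
        calc T.card = T'.card + (T.filter (fun s => R t s)).card := h1
          _ ≤ S.card * d + d := Nat.add_le_add hS3 h2
          _ = (S.card + 1) * d := by ring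

lemma hadamard_rows (M : Matrix (Fin (n+1)) (Fin (n+1)) ℝ) (hM : IsHadamard M) :
    ∃ x : Fin (n+1) → Fin n → Bool,
      ∀ i j, i ≠ j → 2 * hammingDist (x i) (x j) = n + 1 := by
  classical
  set N : Fin (n+1) → Fin (n+1) → ℝ := fun i j => M i j * M i 0 with hN
  have hN1 : ∀ i j, N i j = 1 ∨ N i j = -1 := by
    intro i j
    rcases hM.1 i j with h1 | h1 <;> rcases hM.1 i 0 with h2 | h2 <;>
      simp [hN, h1, h2]
  have hN0 : ∀ i, N i 0 = 1 := by
    intro i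
    rcases hM.1 i 0 with h | h <;> simp [hN, h]
  have hNo : ∀ i j, i ≠ j → ∑ k, N i k * N j k = 0 := by
    intro i j hij
    have e : ∀ k, N i k * N j k = (M i 0 * M j 0) * (M i k * M j k) := by
      intro k; simp only [hN]; ring
    simp_rw [e]
    rw [← Finset.mul_sum, hM.2 i j hij, mul_zero]
  refine ⟨fun i k => if N i k.succ = 1 then false else true, ?_⟩
  intro i j hij
  set A := (Finset.univ.filter fun k : Fin (n+1) => N i k = N j k) with hA
  set D := (Finset.univ.filter fun k : Fin (n+1) => ¬ N i k = N j k) with hD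
  have hsum : ∑ k, N i k * N j k = (A.card : ℝ) - (D.card : ℝ) := by
    have e1 : ∀ k, N i k * N j k =
        (if N i k = N j k then (1:ℝ) else 0) - (if ¬ N i k = N j k then (1:ℝ) else 0) := by
      intro k
      rcases hN1 i k with h1 | h1 <;> rcases hN1 j k with h2 | h2 <;>
        rw [h1, h2] <;> norm_num
    simp_rw [e1]
    rw [Finset.sum_sub_distrib, Finset.sum_boole, Finset.sum_boole]
  have hAD : A.card = D.card := by
    have h0 := hNo i j hij
    rw [hsum] at h0
    have : (A.card : ℝ) = D.card := by linarith
    exact_mod_cast this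
  have hADsum : A.card + D.card = n + 1 := by
    have := Finset.card_filter_add_card_filter_not
      (s := (Finset.univ : Finset (Fin (n+1)))) (p := fun k => N i k = N j k)
    simpa [← hA, ← hD] using this
  have hD2 : 2 * D.card = n + 1 := by omega
  have hdist : hammingDist (fun k : Fin n => if N i k.succ = 1 then false else true)
      (fun k : Fin n => if N j k.succ = 1 then false else true) = D.card := by
    unfold hammingDist
    rw [Finset.card_filter, Finset.card_filter]
    rw [Fin.sum_univ_succ]
    have h00 : ¬ (N i 0 ≠ N j 0) := by rw [hN0 i, hN0 j]; simp
    rw [if_neg h00, zero_add]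
    apply Finset.sum_congr rfl
    intro k _
    rcases hN1 i k.succ with h1 | h1 <;> rcases hN1 j k.succ with h2 | h2 <;>
      simp [h1, h2] <;> norm_num
  rw [hdist, hD2]

lemma hadamard_div4 (hn2 : 2 ≤ n) (M : Matrix (Fin (n+1)) (Fin (n+1)) ℝ)
    (hM : IsHadamard M) : 4 ∣ n + 1 := by
  classical
  set i0 : Fin (n+1) := ⟨0, by omega⟩
  set i1 : Fin (n+1) := ⟨1, by omega⟩
  set i2 : Fin (n+1) := ⟨2, by omega⟩
  have h01 : i1 ≠ i0 := by simp [i0, i1, Fin.ext_iff]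
  have h02 : i2 ≠ i0 := by simp [i0, i2, Fin.ext_iff]
  have h12 : i1 ≠ i2 := by simp [i1, i2, Fin.ext_iff]
  set a : Fin (n+1) → ℝ := fun k => M i1 k * M i0 k with ha
  set b : Fin (n+1) → ℝ := fun k => M i2 k * M i0 k with hb
  have ha1 : ∀ k, a k = 1 ∨ a k = -1 := by
    intro k; rcases hM.1 i1 k with h | h <;> rcases hM.1 i0 k with h' | h' <;>
      simp [ha, h, h']
  have hb1 : ∀ k, b k = 1 ∨ b k = -1 := by
    intro k; rcases hM.1 i2 k with h | h <;> rcases hM.1 i0 k with h' | h' <;>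
      simp [hb, h, h']
  have hsa : ∑ k, a k = 0 := hM.2 i1 i0 h01
  have hsb : ∑ k, b k = 0 := hM.2 i2 i0 h02
  have hsab : ∑ k, a k * b k = 0 := by
    have e : ∀ k, a k * b k = M i1 k * M i2 k := by
      intro k
      have h0 : M i0 k * M i0 k = 1 := by rcases hM.1 i0 k with h | h <;> rw [h] <;> norm_num
      simp only [ha, hb]
      calc M i1 k * M i0 k * (M i2 k * M i0 k) = M i1 k * M i2 k * (M i0 k * M i0 k) := by ring
        _ = M i1 k * M i2 k := by rw [h0, mul_one]
    simp_rw [e]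
    exact hM.2 i1 i2 h12
  have key : ∑ k, (1 + a k) * (1 + b k) = (n + 1 : ℝ) := by
    have e : ∀ k, (1 + a k) * (1 + b k) = 1 + a k + b k + a k * b k := by intro k; ring
    simp_rw [e]
    rw [Finset.sum_add_distrib, Finset.sum_add_distrib, Finset.sum_add_distrib,
      hsa, hsb, hsab, Finset.sum_const, Finset.card_univ, Fintype.card_fin]
    simp
  have key2 : ∑ k, (1 + a k) * (1 + b k) =
      4 * ((Finset.univ.filter fun k => a k = 1 ∧ b k = 1).card : ℝ) := by
    have e : ∀ k, (1 + a k) * (1 + b k) = if a k = 1 ∧ b k = 1 then (4:ℝ) else 0 := by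
      intro k
      rcases ha1 k with h | h <;> rcases hb1 k with h' | h' <;> rw [h, h'] <;> norm_num
    simp_rw [e]
    have e2 : ∀ k, (if a k = 1 ∧ b k = 1 then (4:ℝ) else 0)
        = 4 * (if a k = 1 ∧ b k = 1 then (1:ℝ) else 0) := by
      intro k; split <;> norm_num
    simp_rw [e2]
    rw [← Finset.mul_sum, Finset.sum_boole]
  have hr : (n + 1 : ℝ) = 4 * ((Finset.univ.filter fun k => a k = 1 ∧ b k = 1).card : ℝ) := by
    rw [← key, key2]
  have hnat : n + 1 = 4 * (Finset.univ.filter fun k => a k = 1 ∧ b k = 1).card := by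
    exact_mod_cast hr
  exact ⟨_, hnat⟩

end S7aux

open S7aux
theorem stmt_7 (n : ℕ) (hn : Odd n)
    (hH : ∃ M : Matrix (Fin (n + 1)) (Fin (n + 1)) ℝ, IsHadamard M) :
    ∃ 𝒞 : Finset (Finset {x : Fin n → Bool // Even (hammingDist x (fun _ => false))}),
      (∀ s ∈ 𝒞, (Hn n).IsNClique (n + 1) s) ∧
      (𝒞 : Set (Finset {x : Fin n → Bool // Even (hammingDist x (fun _ => false))})).PairwiseDisjoint id ∧
      Fintype.card {x : Fin n → Bool // Even (hammingDist x (fun _ => false))} / (n + 1) ^ 2 ≤ 𝒞.card := by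
  classical
  obtain ⟨M, hM⟩ := hH
  have h4 : n % 4 = 1 ∨ n % 4 = 3 := by obtain ⟨k, hk⟩ := hn; omega
  rcases h4 with h4 | h4
  · by_cases h1 : n = 1
    · subst h1
      refine ⟨∅, by simp, by simp, ?_⟩
      simp only [Finset.card_empty]
      have hc : Fintype.card {x : Fin 1 → Bool // Even (hammingDist x (fun _ => false))} ≤ 2 := by
        calc Fintype.card {x : Fin 1 → Bool // Even (hammingDist x (fun _ => false))}
            ≤ Fintype.card (Fin 1 → Bool) := Fintype.card_subtype_le _
          _ = 2 := by simp
      have h4' : (1 + 1 : ℕ) ^ 2 = 4 := by norm_num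
      rw [h4']
      omega
    · exfalso
      have hn2 : 2 ≤ n := by
        rcases hn with ⟨k, hk⟩
        omega
      have := hadamard_div4 hn2 M hM
      omega
  · -- main case : n ≡ 3 (mod 4)
    obtain ⟨x, hx⟩ := hadamard_rows M hM
    have heven : ∀ i, Even (hammingDist (xorB (x i) (x 0)) (fun _ => false)) := by
      intro i
      rw [weight_xorB]
      rcases eq_or_ne i 0 with rfl | hi
      · simp
      · have h := hx i 0 hi
        exact even_iff_two_dvd.mpr (by omega)
    set V := {x : Fin n → Bool // Even (hammingDist x (fun _ => false))} with hV
    set f : Fin (n+1) → V := fun i => ⟨xorB (x i) (x 0), heven i⟩ with hf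
    have hfinj : Function.Injective f := by
      intro i j hij
      by_contra hne
      have h := hx i j hne
      have h0 : hammingDist (x i) (x j) = 0 := by
        rw [← dist_xorB_right (x i) (x j) (x 0)]
        have hv : (f i).1 = (f j).1 := congrArg Subtype.val hij
        simp only [hf] at hv
        rw [hv]
        exact hammingDist_self _
      omega
    set K : Finset V := Finset.univ.image f with hK
    have hKcard : K.card = n + 1 := by
      rw [hK, Finset.card_image_of_injective _ hfinj, Finset.card_univ, Fintype.card_fin]
    have hKdist : ∀ a ∈ K, ∀ b ∈ K, a ≠ b → hammingDist a.1 b.1 = (n+1)/2 := by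
      intro a ha b hb hab
      obtain ⟨i, _, rfl⟩ := Finset.mem_image.mp ha
      obtain ⟨j, _, rfl⟩ := Finset.mem_image.mp hb
      have hij : i ≠ j := fun h => hab (by rw [h])
      have h := hx i j hij
      show hammingDist (xorB (x i) (x 0)) (xorB (x j) (x 0)) = (n+1)/2
      rw [dist_xorB_right]
      omega
    -- group operation on V
    set xv : V → V → V := fun t a => ⟨xorB t.1 a.1, by
      rw [weight_xorB]
      rw [even_dist_iff]
      exact iff_of_true t.2 a.2⟩ with hxv
    have hxvinj : ∀ t : V, Function.Injective (xv t) := by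
      intro t a b hab
      have : xorB t.1 a.1 = xorB t.1 b.1 := congrArg Subtype.val hab
      exact Subtype.ext (xorB_left_cancel this)
    have hxvcancel : ∀ s b : V, xv (xv s b) b = s := by
      intro s b
      exact Subtype.ext (xorB_cancel_right s.1 b.1)
    have hclique : ∀ t : V, (Hn n).IsNClique (n+1) (K.image (xv t)) := by
      intro t
      constructor
      · intro u hu v hv huv
        simp only [Finset.coe_image, Set.mem_image, Finset.mem_coe] at hu hv
        obtain ⟨a, ha, rfl⟩ := hu
        obtain ⟨b, hb, rfl⟩ := hv
        have hab : a ≠ b := fun h => huv (by rw [h])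
        show (Hn n).Adj _ _
        rw [Hn, SimpleGraph.fromRel_adj]
        refine ⟨huv, Or.inl ?_⟩
        show hammingDist (xorB t.1 a.1) (xorB t.1 b.1) = (n+1)/2
        rw [dist_xorB_left]
        exact hKdist a ha b hb hab
      · rw [Finset.card_image_of_injective _ (hxvinj t), hKcard]
    -- overlap relation
    set R : V → V → Prop := fun t t' => ∃ a ∈ K, ∃ b ∈ K, xv t a = xv t' b with hR
    have hKne : K.Nonempty := by
      rw [← Finset.card_pos, hKcard]; omega
    have hrefl : ∀ t, R t t := by
      intro t
      obtain ⟨a, ha⟩ := hKne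
      exact ⟨a, ha, a, ha, rfl⟩
    have hsymm : ∀ t t', R t t' → R t' t := by
      rintro t t' ⟨a, ha, b, hb, h⟩
      exact ⟨b, hb, a, ha, h.symm⟩
    have hdeg : ∀ t : V, (Finset.univ.filter fun t' => R t t').card ≤ (n+1)^2 := by
      intro t
      have hsub : (Finset.univ.filter fun t' => R t t') ⊆
          (K ×ˢ K).image (fun p : V × V => xv (xv t p.1) p.2) := by
        intro t' ht'
        obtain ⟨a, ha, b, hb, h⟩ := (Finset.mem_filter.mp ht').2
        refine Finset.mem_image.mpr ⟨(a, b), Finset.mem_product.mpr ⟨ha, hb⟩, ?_⟩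
        show xv (xv t a) b = t'
        rw [h, hxvcancel]
      calc (Finset.univ.filter fun t' => R t t').card
          ≤ ((K ×ˢ K).image (fun p : V × V => xv (xv t p.1) p.2)).card :=
            Finset.card_le_card hsub
        _ ≤ (K ×ˢ K).card := Finset.card_image_le
        _ = (n+1)^2 := by rw [Finset.card_product, hKcard, sq]
    obtain ⟨S, _, hSpair, hScard⟩ := greedy R ((n+1)^2) hrefl hsymm hdeg Finset.univ
    refine ⟨S.image (fun t => K.image (xv t)), ?_, ?_, ?_⟩
    · intro s hs
      obtain ⟨t, _, rfl⟩ := Finset.mem_image.mp hs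
      exact hclique t
    · intro C hC C' hC' hne
      simp only [Finset.coe_image, Set.mem_image, Finset.mem_coe] at hC hC'
      obtain ⟨t, ht, rfl⟩ := hC
      obtain ⟨t', ht', rfl⟩ := hC'
      have htt' : t ≠ t' := fun h => hne (by rw [h])
      have hnR : ¬ R t t' := hSpair t ht t' ht' htt'
      simp only [Function.onFun, id]
      rw [Finset.disjoint_left]
      intro u hu hu'
      obtain ⟨a, ha, hau⟩ := Finset.mem_image.mp hu
      obtain ⟨b, hb, hbu⟩ := Finset.mem_image.mp hu'
      exact hnR ⟨a, ha, b, hb, hau.trans hbu.symm⟩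
    · have himinj : Set.InjOn (fun t => K.image (xv t)) ↑S := by
        intro t ht t' ht' h
        by_contra hne
        have hnR : ¬ R t t' := hSpair t ht t' ht' hne
        obtain ⟨a, ha⟩ := hKne
        have h1 : xv t a ∈ K.image (xv t) := Finset.mem_image_of_mem _ ha
        have h2 : Finset.image (xv t) K = Finset.image (xv t') K := h
        rw [h2] at h1
        obtain ⟨b, hb, hba⟩ := Finset.mem_image.mp h1
        exact hnR ⟨a, ha, b, hb, hba.symm⟩
      rw [Finset.card_image_of_injOn himinj]
      have hcard : Fintype.card V ≤ S.card * (n+1)^2 := by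
        rw [← Finset.card_univ]
        exact hScard
      have hpos : 0 < (n+1)^2 := by positivity
      calc Fintype.card V / (n+1)^2 ≤ S.card * (n+1)^2 / (n+1)^2 :=
            Nat.div_le_div_right hcard
        _ = S.card := Nat.mul_div_cancel _ hpos
end

section
/- For odd n, the graph G_n has an n-dimensional orthonormal representation: there is a map f from vertices of G_n to unit vectors in R^n such that adjacent vertices map to orthogonal vectors. -/
open Finset

variable {ι : Type*} [Fintype ι]

lemma hammingDist_eq_sum_ite {β : Type*} [DecidableEq β] (x y : ι → β) :
    (hammingDist x y : ℝ) = ∑ i, if x i ≠ y i then 1 else 0 := by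
  rw [sum_boole, hammingDist]

noncomputable def affineIndicator (a b : ℝ) (x : ι → Bool) : EuclideanSpace ℝ ι :=
  WithLp.toLp 2 fun i => a + b * if x i then 1 else 0

lemma inner_affineIndicator (a b : ℝ) (x y : ι → Bool) :
    inner ℝ (affineIndicator a b x) (affineIndicator a b y)
      = Fintype.card ι * a ^ 2
        + a * b * (hammingDist x (fun _ => false) + hammingDist y (fun _ => false))
        + b ^ 2 / 2 * (hammingDist x (fun _ => false) + hammingDist y (fun _ => false)
          - hammingDist x y) := by
  have h_const : (Fintype.card ι : ℝ) * a ^ 2 = ∑ _i : ι, a ^ 2 := by simp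
  simp only [affineIndicator, PiLp.inner_apply, RCLike.inner_apply, conj_trivial,
    hammingDist_eq_sum_ite, h_const, mul_sum, ← sum_add_distrib, ← sum_sub_distrib]
  refine sum_congr rfl fun i _ => ?_
  cases x i <;> cases y i <;> simp <;> ring

noncomputable def halfWeightEmbedding (k : ℕ) (x : ι → Bool) : EuclideanSpace ℝ ι :=
  affineIndicator ((1 - √(2 * k)) / Fintype.card ι) (√(2 * k) / k) x

lemma inner_halfWeightEmbedding {k : ℕ} (hk : Fintype.card ι + 1 = 2 * k) {x y : ι → Bool}
    (hx : hammingDist x (fun _ => false) = k) (hy : hammingDist y (fun _ => false) = k) :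
    inner ℝ (halfWeightEmbedding k x) (halfWeightEmbedding k y) = 1 - hammingDist x y / k := by
  set n := Fintype.card ι
  have hn : (n : ℝ) = 2 * k - 1 := by
    rw [eq_sub_iff_add_eq]; exact_mod_cast hk
  have hk₀ : (k : ℝ) ≠ 0 := by norm_cast; omega
  have hn₀ : (n : ℝ) ≠ 0 := by norm_cast; omega
  have hq : √(2 * k) ^ 2 = 2 * k := Real.sq_sqrt (by positivity)
  have hb : (√(2 * k) / k) ^ 2 = 2 / k := by
    rw [div_pow, hq]; field_simp
  have ha : n * ((1 - √(2 * k)) / n) ^ 2 + (1 - √(2 * k)) / n * (√(2 * k) / k) * (k + k) = -1 := by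
    field_simp
    linear_combination hn - hq
  rw [halfWeightEmbedding, halfWeightEmbedding, inner_affineIndicator, hx, hy, ha, hb]
  field_simp
  ring

theorem stmt_8 (n : ℕ) (hn : Odd n) :
    ∃ f : {x : Fin n → Bool // hammingDist x (fun _ => false) = (n + 1) / 2} →
        EuclideanSpace ℝ (Fin n),
      (∀ u, ‖f u‖ = 1) ∧ ∀ u v, (Gn n).Adj u v → inner ℝ (f u) (f v) = (0 : ℝ) := by
  have hk : Fintype.card (Fin n) + 1 = 2 * ((n + 1) / 2) := by
    obtain ⟨m, rfl⟩ := hn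
    rw [Fintype.card_fin]; omega
  refine ⟨fun u => halfWeightEmbedding ((n + 1) / 2) u.1, fun u => ?_, fun u v huv => ?_⟩
  · rw [norm_eq_sqrt_real_inner, inner_halfWeightEmbedding hk u.2 u.2]
    simp
  · have hd : hammingDist u.1 v.1 = (n + 1) / 2 := by
      rcases huv with ⟨-, h | h⟩
      · exact h
      · rwa [hammingDist_comm]
    rw [inner_halfWeightEmbedding hk u.2 v.2, hd, div_self (by norm_cast; omega), sub_self]
end

section
/- Haemers bound (one-shot version): Let G be a finite graph, F a field, and A : V(G) × V(G) → F a matrix such that A(x,x) ≠ 0 for every vertex x and A(x,y) = 0 for every pair of distinct non-adjacent vertices x, y. Then the independence number α(G) is at most the rank of A. -/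
theorem stmt_12 {V : Type*} [Fintype V] [DecidableEq V] (G : SimpleGraph V)
    {F : Type*} [Field F] (A : Matrix V V F)
    (hdiag : ∀ x, A x x ≠ 0)
    (hoff : ∀ x y, x ≠ y → ¬G.Adj x y → A x y = 0)
    (s : Finset V) (hs : ∀ x ∈ s, ∀ y ∈ s, x ≠ y → ¬G.Adj x y) :
    s.card ≤ A.rank := by
  classical
  have li : LinearIndependent F (fun x : s => A x) := by
    rw [Fintype.linearIndependent_iff]
    intro g hg ⟨y, hy⟩
    have := congrFun hg y
    simp only [Finset.sum_apply, Pi.smul_apply, smul_eq_mul, Pi.zero_apply] at this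
    rw [Finset.sum_eq_single (⟨y, hy⟩ : s)] at this
    · exact (mul_eq_zero.mp this).resolve_right (hdiag y)
    · rintro ⟨x, hx⟩ - hxy
      have hne : x ≠ y := fun h => hxy (Subtype.ext h)
      rw [hoff x y hne (hs x hx y hy hne), mul_zero]
    · intro h; exact absurd (Finset.mem_univ _) h
  have h1 : s.card = Module.finrank F (Submodule.span F (Set.range fun x : s => A x)) := by
    rw [← Set.finrank, ← linearIndependent_iff_card_eq_finrank_span.mp li,
      Fintype.card_coe]
  rw [A.rank_eq_finrank_span_row, h1]
  apply Submodule.finrank_mono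
  apply Submodule.span_mono
  rintro - ⟨x, rfl⟩
  exact ⟨x, rfl⟩
end

section
/- Haemers bound under tensor powers: Let G be a finite graph, F a field, and A a V(G) × V(G) matrix over F with A(x,x) ≠ 0 for every vertex x and A(x,y) = 0 for every pair of distinct non-adjacent vertices. Then for every n ≥ 1, α(G^{⊠n}) ≤ rank(A)^n, where G^{⊠n} is the n-fold strong graph power. -/
/-- The `k`-fold strong graph power of `G`. -/
def strongPow {V : Type*} (G : SimpleGraph V) (k : ℕ) : SimpleGraph (Fin k → V) where
  Adj x y := x ≠ y ∧ ∀ i, x i = y i ∨ G.Adj (x i) (y i)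
  symm := ⟨by
    rintro x y ⟨hne, h⟩
    exact ⟨fun he => hne he.symm, fun i => (h i).imp Eq.symm (G.adj_symm ·)⟩⟩
  loopless := ⟨fun x h => h.1 rfl⟩

/-!
Haemers' argument: the `k`-th Kronecker power `B` of `A`, with entries
`B x y = ∏ i, A (x i) (y i)`, has nonzero diagonal and vanishes between distinct non-adjacent
vertices of the strong power, so an independent set `s` indexes a diagonal submatrix of `B` of
full rank, whence `|s| ≤ rank B`. A rank factorization `A = C * D` through `Fin (rank A)`
factors `B` through `Fin k → Fin (rank A)`, so `rank B ≤ (rank A) ^ k`.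
-/

theorem strongPow_exists_ne_not_adj {V : Type*} {G : SimpleGraph V} {k : ℕ} {x y : Fin k → V}
    (hxy : x ≠ y) (h : ¬(strongPow G k).Adj x y) : ∃ i, x i ≠ y i ∧ ¬G.Adj (x i) (y i) := by
  simpa [strongPow, hxy, not_or] using h

namespace Matrix

variable {l m n : Type*} {F : Type*}

theorem exists_eq_mul_of_rank [Field F] [Fintype n] (A : Matrix m n F) :
    ∃ (C : Matrix m (Fin A.rank) F) (D : Matrix (Fin A.rank) n F), A = C * D := by
  set W := Submodule.span F (Set.range A.col)
  have hcol : ∀ j, A.col j ∈ W := fun j => Submodule.subset_span ⟨j, rfl⟩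
  have : Module.Finite F W := Module.Finite.span_of_finite F (Set.finite_range _)
  let b : Module.Basis (Fin A.rank) F W :=
    Module.finBasisOfFinrankEq F W A.rank_eq_finrank_span_cols.symm
  refine ⟨of fun x i => (b i : m → F) x, of fun i j => b.repr ⟨_, hcol j⟩ i, ?_⟩
  ext x j
  have h := congrArg (fun w : W => (w : m → F) x) (b.sum_repr ⟨A.col j, hcol j⟩)
  simp only [Submodule.coe_sum, SetLike.val_smul, Finset.sum_apply, Pi.smul_apply,
    smul_eq_mul, col_apply] at h
  rw [← h, mul_apply]
  simp only [of_apply]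
  exact Finset.sum_congr rfl fun i _ => mul_comm _ _

def kroneckerPow [CommMonoid F] (A : Matrix m n F) (k : ℕ) : Matrix (Fin k → m) (Fin k → n) F :=
  of fun x y => ∏ i, A (x i) (y i)

theorem kroneckerPow_mul [CommSemiring F] [Fintype m] (A : Matrix l m F) (B : Matrix m n F)
    (k : ℕ) : kroneckerPow (A * B) k = kroneckerPow A k * kroneckerPow B k := by
  ext x y
  simp only [kroneckerPow, mul_apply, of_apply]
  rw [Finset.prod_univ_sum, Fintype.piFinset_univ]
  exact Finset.sum_congr rfl fun f _ => Finset.prod_mul_distrib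

theorem rank_kroneckerPow_le [Field F] [Fintype n] (A : Matrix m n F) (k : ℕ) :
    (kroneckerPow A k).rank ≤ A.rank ^ k := by
  obtain ⟨C, D, hA⟩ := exists_eq_mul_of_rank A
  calc (kroneckerPow A k).rank = (kroneckerPow C k * kroneckerPow D k).rank := by
        rw [← kroneckerPow_mul, ← hA]
    _ ≤ (kroneckerPow C k).rank := rank_mul_le_left _ _
    _ ≤ Fintype.card (Fin k → Fin A.rank) := rank_le_card_width _
    _ = A.rank ^ k := by simp

theorem card_le_rank_of_isDiag_on [Field F] [Fintype n] (B : Matrix n n F) (s : Finset n)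
    (hdiag : ∀ x ∈ s, B x x ≠ 0) (hoff : ∀ x ∈ s, ∀ y ∈ s, x ≠ y → B x y = 0) :
    s.card ≤ B.rank := by
  classical
  have hsub : B.submatrix ((↑) : s → n) (↑) = diagonal fun x : s => B x x := by
    ext x y
    by_cases hxy : x = y
    · simp [hxy]
    · simp [diagonal_apply_ne _ hxy, hoff x x.2 y y.2 (Subtype.coe_injective.ne hxy)]
  calc s.card = (diagonal fun x : s => B x x).rank := by
        rw [rank_diagonal, Fintype.card_of_subtype Finset.univ fun x => by simp [hdiag x x.2],
          Finset.card_univ, Fintype.card_coe]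
    _ = (B.submatrix ((↑) : s → n) ((↑) : s → n)).rank := by rw [hsub]
    _ ≤ B.rank := rank_submatrix_le _ _ _

end Matrix

open Matrix in
theorem stmt_13_general {V : Type*} [Fintype V] (G : SimpleGraph V)
    {F : Type*} [Field F] (A : Matrix V V F)
    (hdiag : ∀ x, A x x ≠ 0)
    (hoff : ∀ x y, x ≠ y → ¬G.Adj x y → A x y = 0)
    (k : ℕ)
    (s : Finset (Fin k → V))
    (hs : ∀ x ∈ s, ∀ y ∈ s, x ≠ y → ¬(strongPow G k).Adj x y) :
    s.card ≤ A.rank ^ k := by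
  refine le_trans (card_le_rank_of_isDiag_on (kroneckerPow A k) s ?_ ?_) (rank_kroneckerPow_le A k)
    <;> simp only [kroneckerPow, of_apply]
  · exact fun x _ => Finset.prod_ne_zero_iff.2 fun i _ => hdiag (x i)
  · intro x hx y hy hxy
    obtain ⟨i, hne, hnadj⟩ := strongPow_exists_ne_not_adj hxy (hs x hx y hy hxy)
    exact Finset.prod_eq_zero (Finset.mem_univ i) (hoff _ _ hne hnadj)

theorem stmt_13 {V : Type*} [Fintype V] [DecidableEq V] (G : SimpleGraph V)
    {F : Type*} [Field F] (A : Matrix V V F)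
    (hdiag : ∀ x, A x x ≠ 0)
    (hoff : ∀ x y, x ≠ y → ¬G.Adj x y → A x y = 0)
    (k : ℕ) (hk : 1 ≤ k)
    (s : Finset (Fin k → V))
    (hs : ∀ x ∈ s, ∀ y ∈ s, x ≠ y → ¬(strongPow G k).Adj x y) :
    s.card ≤ A.rank ^ k :=
  stmt_13_general G A hdiag hoff k s hs
end

section
/- Shannon capacity upper bound: Let p be an odd prime, n = 4p - 1, and let G be the graph H_n (binary strings of length n with even Hamming weight, adjacent iff Hamming distance (n+1)/2 = 2p). Then for every k ≥ 1, α(G^{⊠k}) ≤ (C(n,0) + C(n,1) + ... + C(n,p-1))^k. -/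
/-!
Frankl–Wilson polynomial method over `ZMod p`. For strings `a, b` put
`Q_a(b) = d(a, b)^(p-1) - 1`: by Fermat, `Q_a(b) = 0` iff `p ∤ d(a, b)`, while `Q_a(a) = -1`.
Distances in `H_n` are even and smaller than `4p`, so for distinct non-adjacent vertices
(distance `≠ 2p`) `p` does not divide the distance. Hence for an independent set `s` of the
strong power, the functions `y ↦ ∏ⱼ Q_{xⱼ}(yⱼ)`, `x ∈ s`, are diagonal on `s` and so linearly
independent. They lie in the image of the `k`-th tensor power of the space of polynomials of
degree `< p` in the `n` coordinates, which (as `xᵢ² = xᵢ` on `0/1` vectors) is spanned by the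
`∑_{i<p} C(n, i)` multilinear monomials.
-/

open Finset Module Submodule

namespace Submodule

theorem prod_mem_prod {R A ι : Type*} [CommSemiring R] [CommSemiring A] [Algebra R A]
    (t : Finset ι) (M : ι → Submodule R A) (f : ι → A) (hf : ∀ i ∈ t, f i ∈ M i) :
    ∏ i ∈ t, f i ∈ ∏ i ∈ t, M i := by
  rw [← t.prod_congr rfl fun i _ => span_eq (M i), prod_span]
  exact subset_span (Set.finsetProd_mem_finsetProd t _ f hf)

variable {K A : Type*} [Field K]

theorem finrank_mul_le [Ring A] [Algebra K A] [FiniteDimensional K A] (M N : Submodule K A) :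
    finrank K ↥(M * N) ≤ finrank K M * finrank K N := by
  rw [← mulMap_range, ← finrank_tensorProduct]
  exact LinearMap.finrank_range_le _

theorem finrank_prod_le [CommRing A] [Algebra K A] [FiniteDimensional K A] {ι : Type*}
    (t : Finset ι) (M : ι → Submodule K A) :
    finrank K ↥(∏ i ∈ t, M i) ≤ ∏ i ∈ t, finrank K (M i) :=
  t.le_prod_of_submultiplicative (fun N : Submodule K A => finrank K N)
    (by rw [one_eq_span]; simpa using finrank_span_le_card (R := K) ({1} : Set A))
    finrank_mul_le M

end Submodule

section Functions

variable {K X : Type*} [Field K]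

theorem card_le_finrank_of_diagonal (W : Submodule K (X → K)) [FiniteDimensional K W]
    (s : Finset X) (P : X → X → K) (hmem : ∀ x ∈ s, P x ∈ W)
    (hdiag : ∀ x ∈ s, P x x ≠ 0) (hoff : ∀ x ∈ s, ∀ y ∈ s, x ≠ y → P x y = 0) :
    s.card ≤ finrank K W := by
  let v : s → W := fun x => ⟨P x, hmem x x.2⟩
  let ev : s → Dual K W := fun x =>
    (P x x)⁻¹ • (LinearMap.proj (R := K) (φ := fun _ => K) x.1).comp W.subtype
  have hv : LinearIndependent K v := by
    refine .of_pairwise_dual_eq_zero_one v ev (fun x y hxy => ?_) fun x => ?_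
    · simp [ev, v, hoff y y.2 x x.2 (Subtype.coe_ne_coe.2 hxy.symm)]
    · simp [ev, v, hdiag x x.2]
  simpa using hv.fintype_card_le_finrank

/-- The image of `M^{⊗k}` in the functions on `X^k`. -/
def tensorPower (M : Submodule K (X → K)) (k : ℕ) : Submodule K ((Fin k → X) → K) :=
  ∏ j : Fin k, M.map (LinearMap.funLeft K K fun y : Fin k → X => y j)

theorem prod_apply_mem_tensorPower {M : Submodule K (X → K)} {k : ℕ} (f : Fin k → X → K)
    (hf : ∀ j, f j ∈ M) : (fun y => ∏ j, f j (y j)) ∈ tensorPower M k := by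
  have : (fun y : Fin k → X => ∏ j, f j (y j)) =
      ∏ j, LinearMap.funLeft K K (fun y : Fin k → X => y j) (f j) := by
    funext y
    simp [Finset.prod_apply, LinearMap.funLeft]
  rw [this]
  exact prod_mem_prod _ _ _ fun j _ => mem_map_of_mem (hf j)

theorem finrank_tensorPower_le [Finite X] (M : Submodule K (X → K)) (k : ℕ) :
    finrank K (tensorPower M k) ≤ finrank K M ^ k :=
  calc finrank K (tensorPower M k)
      _ ≤ ∏ j : Fin k, finrank K (M.map (LinearMap.funLeft K K fun y : Fin k → X => y j)) :=
        finrank_prod_le univ _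
      _ ≤ ∏ _j : Fin k, finrank K M :=
        prod_le_prod (fun _ _ => Nat.zero_le _) fun _ _ => finrank_map_le _ _
      _ = finrank K M ^ k := by simp

end Functions

section AffineFunctions

open Pointwise

variable (K : Type*) [Field K] {n : ℕ}

def bitFn (i : Fin n) : (Fin n → Bool) → K := fun x => if x i then 1 else 0

def affineFns (n : ℕ) : Submodule K ((Fin n → Bool) → K) :=
  span K (insert 1 (Set.range (bitFn K)))

variable {K}

theorem one_mem_affineFns : (1 : (Fin n → Bool) → K) ∈ affineFns K n :=
  subset_span (Set.mem_insert _ _)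

theorem bitFn_mem_affineFns (i : Fin n) : bitFn K i ∈ affineFns K n :=
  subset_span (Set.mem_insert_of_mem _ ⟨i, rfl⟩)

theorem prod_bitFn_insert (i : Fin n) (T : Finset (Fin n)) :
    ∏ j ∈ insert i T, bitFn K j = (∏ j ∈ T, bitFn K j) * bitFn K i := by
  funext x
  by_cases hi : x i <;> simp [bitFn, prod_boole, hi]

theorem pow_subset_prod_bitFn (d : ℕ) :
    (insert 1 (Set.range (bitFn K)) : Set ((Fin n → Bool) → K)) ^ d ⊆
      {f | ∃ T : Finset (Fin n), T.card ≤ d ∧ f = ∏ i ∈ T, bitFn K i} := by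
  induction d with
  | zero => intro f hf; exact ⟨∅, by simp, by simpa using hf⟩
  | succ d ih =>
    rintro _ ⟨f, hf, g, hg, rfl⟩
    obtain ⟨T, hT, rfl⟩ := ih hf
    rcases hg with rfl | ⟨i, rfl⟩
    · exact ⟨T, by omega, mul_one _⟩
    · exact ⟨insert i T, (card_insert_le i T).trans (by omega), (prod_bitFn_insert i T).symm⟩

theorem finrank_affineFns_pow_le (d : ℕ) :
    finrank K ↥(affineFns K n ^ d) ≤ ∑ i ∈ range (d + 1), n.choose i := by
  classical
  let T : Finset (Finset (Fin n)) := (range (d + 1)).biUnion fun i => powersetCard i univ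
  let B : Finset ((Fin n → Bool) → K) := T.image fun S => ∏ i ∈ S, bitFn K i
  calc finrank K ↥(affineFns K n ^ d)
      _ ≤ (B : Set ((Fin n → Bool) → K)).finrank K := by
        rw [affineFns, span_pow, Set.finrank]
        refine finrank_mono (span_mono fun f hf => ?_)
        obtain ⟨S, hS, rfl⟩ := pow_subset_prod_bitFn d hf
        simp only [B, T, coe_image, coe_biUnion]
        exact ⟨S, by simp; omega, rfl⟩
      _ ≤ B.card := finrank_span_finset_le_card B
      _ ≤ T.card := card_image_le
      _ ≤ ∑ i ∈ range (d + 1), (powersetCard i (univ : Finset (Fin n))).card :=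
        card_biUnion_le
      _ = ∑ i ∈ range (d + 1), n.choose i := by simp

theorem hammingDist_mem_affineFns (a : Fin n → Bool) :
    (fun b => (hammingDist a b : K)) ∈ affineFns K n := by
  have h : (fun b => (hammingDist a b : K)) = ∑ i, if a i then 1 - bitFn K i else bitFn K i := by
    funext b
    simp only [hammingDist, card_filter, Nat.cast_sum, Finset.sum_apply]
    refine sum_congr rfl fun i _ => ?_
    cases a i <;> cases hb : b i <;> simp [bitFn, hb]
  rw [h]
  refine sum_mem fun i _ => ?_
  split_ifs
  · exact sub_mem one_mem_affineFns (bitFn_mem_affineFns i)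
  · exact bitFn_mem_affineFns i

theorem hammingDist_pow_sub_one_mem (a : Fin n → Bool) (d : ℕ) :
    (fun b => (hammingDist a b : K)) ^ d - 1 ∈ affineFns K n ^ d :=
  sub_mem (pow_mem_pow _ (hammingDist_mem_affineFns a) d)
    (by simpa using pow_mem_pow _ (one_mem_affineFns (K := K) (n := n)) d)

end AffineFunctions

theorem even_hammingDist {n : ℕ} {a b : Fin n → Bool} (ha : Even (hammingDist a fun _ => false))
    (hb : Even (hammingDist b fun _ => false)) : Even (hammingDist a b) := by
  have key : hammingDist a b + 2 * #{i | a i = true ∧ b i = true} =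
      hammingDist a (fun _ => false) + hammingDist b (fun _ => false) := by
    simp only [hammingDist, card_filter, mul_sum, ← sum_add_distrib]
    exact sum_congr rfl fun i _ => by cases a i <;> cases b i <;> rfl
  exact (Nat.even_add.1 (key ▸ ha.add hb)).2 (even_two_mul _)

theorem not_dvd_of_even_of_lt_four_mul {p d : ℕ} (hp : Odd p) (hd : Even d) (hd0 : d ≠ 0)
    (hlt : d < 4 * p) (h2 : d ≠ 2 * p) : ¬ p ∣ d := by
  rintro ⟨c, rfl⟩
  have hc : c < 4 := Nat.lt_of_mul_lt_mul_left (a := p) (by linarith)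
  interval_cases c <;> simp_all [Nat.even_iff, Nat.odd_iff] <;> omega

theorem Hn.not_dvd_hammingDist {p n : ℕ} (hodd : Odd p) (hn : n = 4 * p - 1)
    {u v : {x : Fin n → Bool // Even (hammingDist x fun _ => false)}} (huv : u ≠ v)
    (hadj : ¬ (Hn n).Adj u v) : ¬ p ∣ hammingDist u.1 v.1 := by
  refine not_dvd_of_even_of_lt_four_mul hodd (even_hammingDist u.2 v.2)
    (hammingDist_ne_zero.2 (Subtype.coe_ne_coe.2 huv)) ?_ fun h => hadj ⟨huv, Or.inl ?_⟩
  · have := hodd.pos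
    exact hammingDist_le_card_fintype.trans_lt (by simp; omega)
  · omega

theorem exists_not_adj_of_not_strongPow_adj {V : Type*} {G : SimpleGraph V} {k : ℕ}
    {x y : Fin k → V} (hxy : x ≠ y) (h : ¬ (strongPow G k).Adj x y) :
    ∃ j, x j ≠ y j ∧ ¬ G.Adj (x j) (y j) := by
  simpa [strongPow, hxy, not_or] using h

theorem stmt_17_general (p n : ℕ) (hp : p.Prime) (hodd : Odd p) (hn : n = 4 * p - 1)
    (k : ℕ)
    (s : Finset (Fin k → {x : Fin n → Bool // Even (hammingDist x (fun _ => false))}))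
    (hs : ∀ x ∈ s, ∀ y ∈ s, x ≠ y → ¬(strongPow (Hn n) k).Adj x y) :
    s.card ≤ (∑ i ∈ Finset.range p, n.choose i) ^ k := by
  have := Fact.mk hp
  let M : Submodule (ZMod p)
      ({x : Fin n → Bool // Even (hammingDist x (fun _ => false))} → ZMod p) :=
    (affineFns (ZMod p) n ^ (p - 1)).map (LinearMap.funLeft _ _ Subtype.val)
  let P (x y : Fin k → {x : Fin n → Bool // Even (hammingDist x (fun _ => false))}) : ZMod p :=
    ∏ j, ((hammingDist (x j).1 (y j).1 : ZMod p) ^ (p - 1) - 1)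
  have hmem (x) (_ : x ∈ s) : P x ∈ tensorPower M k :=
    prod_apply_mem_tensorPower _ fun j => mem_map_of_mem (hammingDist_pow_sub_one_mem _ _)
  have hdiag (x) (_ : x ∈ s) : P x x ≠ 0 := by
    simp [P, zero_pow (Nat.sub_ne_zero_of_lt hp.one_lt)]
  have hoff (x) (hx : x ∈ s) (y) (hy : y ∈ s) (hxy : x ≠ y) : P x y = 0 := by
    obtain ⟨j, hne, hadj⟩ := exists_not_adj_of_not_strongPow_adj hxy (hs x hx y hy hxy)
    refine prod_eq_zero (mem_univ j) (sub_eq_zero.2 (ZMod.pow_card_sub_one_eq_one ?_))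
    rw [ne_eq, ZMod.natCast_eq_zero_iff]
    exact Hn.not_dvd_hammingDist hodd hn hne hadj
  calc s.card ≤ finrank (ZMod p) (tensorPower M k) :=
        card_le_finrank_of_diagonal _ s P hmem hdiag hoff
    _ ≤ finrank (ZMod p) M ^ k := finrank_tensorPower_le M k
    _ ≤ (∑ i ∈ range p, n.choose i) ^ k := by
      refine Nat.pow_le_pow_left ((finrank_map_le _ _).trans ?_) k
      simpa [Nat.sub_add_cancel hp.one_lt.le] using finrank_affineFns_pow_le (K := ZMod p) (p - 1)

theorem stmt_17 (p n : ℕ) (hp : p.Prime) (hodd : Odd p) (hn : n = 4 * p - 1)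
    (k : ℕ) (hk : 1 ≤ k)
    (s : Finset (Fin k → {x : Fin n → Bool // Even (hammingDist x (fun _ => false))}))
    (hs : ∀ x ∈ s, ∀ y ∈ s, x ≠ y → ¬(strongPow (Hn n) k).Adj x y) :
    s.card ≤ (∑ i ∈ Finset.range p, n.choose i) ^ k :=
  stmt_17_general p n hp hodd hn k s hs
end
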